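/- Let T be a finite tree with positive edge weights and tree metric d, let m > 0, and let a, b, a', b' be leaves with a ≠ b and a' ≠ b' such that d(a,b) ≤ m, d(a',b') ≤ m, and d(u,v) ≥ m for every u ∈ {a,b} and v ∈ {a',b'}. Then the edge sets of the paths Path(a,b) and Path(a',b') in T are disjoint. -/

import Mathlib

/-!
If an edge `e = s(x, y)` lay on both paths, cutting each path at `e` would give
`d(a,b) = d(a,x) + w e + d(y,b)` and, after possibly swapping `a'` and `b'`,
`d(a',b') = d(a',x) + w e + d(y,b')`. The triangle inequality through `x` and through `y` then
yields `d(a,a') + d(b,b') + 2 w e ≤ d(a,b) + d(a',b') ≤ 2m`, which is impossible since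
`d(a,a'), d(b,b') ≥ m` and `w e > 0`.
-/

open scoped Classical
open Real

noncomputable section

namespace RAS

variable {V : Type}

/-- The canonical path (as a walk) between two vertices of a tree. -/
def tpath (G : SimpleGraph V) [DecidableEq V] (hG : G.IsTree) (u v : V) : G.Walk u v :=
  ((Classical.choice (hG.isConnected.preconnected u v)).toPath : G.Path u v).1

/-- Tree metric: sum of edge weights along the path. -/
def tdist (G : SimpleGraph V) [DecidableEq V] (hG : G.IsTree) (w : Sym2 V → ℝ) (u v : V) : ℝ :=
  ((tpath G hG u v).edges.map w).sum

/-- Edges of the canonical path. -/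
def pathEdges (G : SimpleGraph V) [DecidableEq V] (hG : G.IsTree) (u v : V) :
    List (Sym2 V) :=
  (tpath G hG u v).edges

/-- A leaf is a vertex of degree 1. -/
def IsLeaf (G : SimpleGraph V) (v : V) : Prop := (G.neighborSet v).ncard = 1

/-- A symmetric edge factor depending on whether the endpoint states agree. -/
def agreeIf {α : Type} (σ : V → α) (A B : ℝ) : Sym2 V → ℝ :=
  Sym2.lift ⟨fun u v => if σ u = σ v then A else B, fun u v => by
    simp only []
    by_cases h : σ u = σ v
    · rw [if_pos h, if_pos h.symm]
    · rw [if_neg h, if_neg (fun hh => h hh.symm)]⟩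

/-- Probability mass function of the `r`-state Poisson model on a weighted tree. -/
def poissonPMF (G : SimpleGraph V) [Fintype V] [DecidableEq V]
    (w : Sym2 V → ℝ) (r : ℕ) (σ : V → Fin r) : ℝ :=
  (r : ℝ)⁻¹ * ∏ e ∈ (Set.toFinite G.edgeSet).toFinset,
      agreeIf σ ((r : ℝ)⁻¹ + (1 - (r : ℝ)⁻¹) * exp (-(w e)))
        ((r : ℝ)⁻¹ * (1 - exp (-(w e)))) e

/-- Probability of an event under a pmf on a finite configuration space. -/
def fprob {Ω : Type} [Fintype Ω] (p : Ω → ℝ) (A : Set Ω) : ℝ :=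
  ∑ ω : Ω, if ω ∈ A then p ω else 0

end RAS

namespace SimpleGraph.Walk

variable {V : Type} {G : SimpleGraph V}

theorem exists_eq_append_cons_of_mem_edges {u v : V} {p : G.Walk u v} {e : Sym2 V}
    (he : e ∈ p.edges) :
    ∃ (x y : V) (h : G.Adj x y) (q : G.Walk u x) (r : G.Walk y v),
      e = s(x, y) ∧ p = q.append (cons h r) := by
  induction p with
  | nil => simp at he
  | cons h p ih =>
    rcases List.mem_cons.1 he with rfl | he
    · exact ⟨_, _, h, nil, p, rfl, rfl⟩
    · obtain ⟨x, y, hxy, q, r, rfl, rfl⟩ := ih he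
      exact ⟨x, y, hxy, cons h q, r, rfl, rfl⟩

end SimpleGraph.Walk

namespace RAS

open SimpleGraph

variable {V : Type} [DecidableEq V] {G : SimpleGraph V} (hG : G.IsTree) (w : Sym2 V → ℝ)

theorem tpath_isPath (u v : V) : (tpath G hG u v).IsPath :=
  ((Classical.choice (hG.connected.preconnected u v)).toPath : G.Path u v).2

theorem tpath_eq_of_isPath {u v : V} {p : G.Walk u v} (hp : p.IsPath) : tpath G hG u v = p :=
  (hG.existsUnique_path u v).unique (tpath_isPath hG u v) hp

theorem tdist_eq_of_isPath {u v : V} {p : G.Walk u v} (hp : p.IsPath) :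
    tdist G hG w u v = (p.edges.map w).sum := by
  rw [tdist, tpath_eq_of_isPath hG hp]

theorem tdist_comm (u v : V) : tdist G hG w u v = tdist G hG w v u := by
  rw [tdist_eq_of_isPath hG w (tpath_isPath hG u v).reverse, Walk.edges_reverse,
    List.map_reverse, List.sum_reverse, tdist]

theorem tdist_triangle (hw : ∀ e ∈ G.edgeSet, 0 ≤ w e) (u x v : V) :
    tdist G hG w u v ≤ tdist G hG w u x + tdist G hG w x v := by
  set q : G.Walk u v := (tpath G hG u x).append (tpath G hG x v)
  -- The path from `u` to `v` is the bypass of `q`, whose edges are a duplicate-free part of `q`'s.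
  obtain ⟨l, hperm, hsub⟩ :=
    (q.bypass.edges_nodup_of_support_nodup q.bypass_isPath.support_nodup).subperm
      q.edges_bypass_subset_edges
  calc tdist G hG w u v = (l.map w).sum := by
        rw [tdist_eq_of_isPath hG w q.bypass_isPath, (hperm.map w).sum_eq]
    _ ≤ (q.edges.map w).sum := (hsub.map w).sum_le_sum <| by
        simpa using fun e he => hw e (q.edges_subset_edgeSet he)
    _ = tdist G hG w u x + tdist G hG w x v := by
        rw [Walk.edges_append, List.map_append, List.sum_append, tdist, tdist]

theorem exists_tdist_add_add_tdist_of_mem_pathEdges {u v : V} {e : Sym2 V}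
    (he : e ∈ pathEdges G hG u v) :
    ∃ x y, e = s(x, y) ∧ tdist G hG w u x + w e + tdist G hG w y v = tdist G hG w u v := by
  obtain ⟨x, y, h, q, r, rfl, hqr⟩ := Walk.exists_eq_append_cons_of_mem_edges he
  have hpath : (q.append (Walk.cons h r)).IsPath := hqr ▸ tpath_isPath hG u v
  refine ⟨x, y, rfl, ?_⟩
  rw [tdist_eq_of_isPath hG w hpath.of_append_left,
    tdist_eq_of_isPath hG w hpath.of_append_right.of_cons, tdist, hqr]
  simp [add_assoc]

theorem tdist_add_tdist_add_two_mul_le (hw : ∀ e ∈ G.edgeSet, 0 ≤ w e) {a b a' b' x y : V}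
    {c : ℝ} (h : tdist G hG w a x + c + tdist G hG w y b = tdist G hG w a b)
    (h' : tdist G hG w a' x + c + tdist G hG w y b' = tdist G hG w a' b') :
    tdist G hG w a a' + tdist G hG w b b' + 2 * c ≤ tdist G hG w a b + tdist G hG w a' b' := by
  linarith [tdist_triangle hG w hw a x a', tdist_triangle hG w hw b y b',
    tdist_comm hG w x a', tdist_comm hG w b y]

end RAS

theorem far_pairs_edge_disjoint_general
    {V : Type} [DecidableEq V] (G : SimpleGraph V) (hG : G.IsTree)
    (w : Sym2 V → ℝ) (hw : ∀ e ∈ G.edgeSet, 0 < w e)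
    (m : ℝ) (a b a' b' : V)
    (hd1 : RAS.tdist G hG w a b ≤ m) (hd2 : RAS.tdist G hG w a' b' ≤ m)
    (hfar : ∀ u ∈ ({a, b} : Set V), ∀ v ∈ ({a', b'} : Set V),
      m ≤ RAS.tdist G hG w u v) :
    List.Disjoint (RAS.pathEdges G hG a b) (RAS.pathEdges G hG a' b') := by
  intro e he he'
  have hw₀ : ∀ e ∈ G.edgeSet, 0 ≤ w e := fun e he => (hw e he).le
  have hpos : 0 < w e := hw e ((RAS.tpath G hG a b).edges_subset_edgeSet he)
  obtain ⟨x, y, rfl, h⟩ := RAS.exists_tdist_add_add_tdist_of_mem_pathEdges hG w he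
  obtain ⟨x', y', hxy, h'⟩ := RAS.exists_tdist_add_add_tdist_of_mem_pathEdges hG w he'
  rcases Sym2.eq_iff.1 hxy with ⟨rfl, rfl⟩ | ⟨rfl, rfl⟩
  · linarith [RAS.tdist_add_tdist_add_two_mul_le hG w hw₀ h h',
      hfar a (by simp) a' (by simp), hfar b (by simp) b' (by simp)]
  · have h'' : RAS.tdist G hG w b' x + w s(x, y) + RAS.tdist G hG w y a' =
        RAS.tdist G hG w b' a' := by
      linarith [RAS.tdist_comm hG w b' x, RAS.tdist_comm hG w y a', RAS.tdist_comm hG w b' a']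
    linarith [RAS.tdist_add_tdist_add_two_mul_le hG w hw₀ h h'', RAS.tdist_comm hG w b' a',
      hfar a (by simp) b' (by simp), hfar b (by simp) a' (by simp)]

/-- In a finite weighted tree, if `d(a,b) ≤ m`, `d(a',b') ≤ m`
and `d(u,v) ≥ m` for every `u ∈ {a,b}` and `v ∈ {a',b'}`, then the paths
between `a,b` and between `a',b'` are edge-disjoint. -/
theorem far_pairs_edge_disjoint
    {V : Type} [Fintype V] [DecidableEq V] (G : SimpleGraph V) (hG : G.IsTree)
    (w : Sym2 V → ℝ) (hw : ∀ e ∈ G.edgeSet, 0 < w e)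
    (m : ℝ) (hm : 0 < m) (a b a' b' : V)
    (hla : RAS.IsLeaf G a) (hlb : RAS.IsLeaf G b)
    (hla' : RAS.IsLeaf G a') (hlb' : RAS.IsLeaf G b')
    (hab : a ≠ b) (hab' : a' ≠ b')
    (hd1 : RAS.tdist G hG w a b ≤ m) (hd2 : RAS.tdist G hG w a' b' ≤ m)
    (hfar : ∀ u ∈ ({a, b} : Set V), ∀ v ∈ ({a', b'} : Set V),
      m ≤ RAS.tdist G hG w u v) :
    List.Disjoint (RAS.pathEdges G hG a b) (RAS.pathEdges G hG a' b') :=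
  far_pairs_edge_disjoint_general G hG w hw m a b a' b' hd1 hd2 hfar
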